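/- Let d = 3, Ω = ℝ³, φ(v) = exp(−v₁² − 2v₂² − 3v₃²), and f(v) = exp(−v₁²/2 − v₂²/4 − v₃²/8) for v ∈ ℝ³. Then the Landau operator satisfies Q(f,f)(v) = ∇_v · Q^c(f,f)(v) = −(1/41006250) · q₁(v) · (q₃₁(v) + q₃₂(v)) for every v ∈ ℝ³, where q₁(v) = √3 · π^{3/2} · exp(−(5/6)v₁² − (17/36)v₂² − (49/200)v₃²), q₃₁(v) = 17500v₁²v₂² + 7047v₁²v₃² + 135v₂²v₃², and q₃₂(v) = −1005300v₁² + 111000v₂² + 46899v₃² + 369900. -/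

import Mathlib

open MeasureTheory

/-- The Landau integral operator
Q^c(f,f)(v) = ∫_Ω φ(v−w) P(v−w) (f(w) ∇f(v) − f(v) ∇f(w)) dw,
where P(z) = |z|² I_d − z⊗z acts on a vector g as P(z) g = |z|² g − ⟨z, g⟩ z. -/
noncomputable def landauQc {d : ℕ} (Ω : Set (EuclideanSpace ℝ (Fin d)))
    (φ : EuclideanSpace ℝ (Fin d) → ℝ) (f : EuclideanSpace ℝ (Fin d) → ℝ)
    (v : EuclideanSpace ℝ (Fin d)) : EuclideanSpace ℝ (Fin d) :=
  ∫ w in Ω, φ (v - w) •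
    ((‖v - w‖ ^ 2) • (f w • gradient f v - f v • gradient f w)
      - (inner ℝ (v - w) (f w • gradient f v - f v • gradient f w) : ℝ) • (v - w))

/-- Divergence ∇·F of a vector field on ℝ^d. -/
noncomputable def landauDiv {d : ℕ} (F : EuclideanSpace ℝ (Fin d) → EuclideanSpace ℝ (Fin d))
    (v : EuclideanSpace ℝ (Fin d)) : ℝ :=
  ∑ i, fderiv ℝ (fun u => F u i) v (EuclideanSpace.single i 1)

/-! For `f = exp (-∑ aₖ vₖ²)` one has `f(w) ∇f(v) - f(v) ∇f(w) = -2 f(v) f(w) A (v - w)` with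
`A = diag a`, and the `i`-th component of `P(z) A z` is `zᵢ ∑ⱼ (aᵢ - aⱼ) zⱼ²`. After the
substitution `z = v - w`, the `i`-th component of `Q^c(f,f)` for a diagonal Gaussian `φ` is
thus a sum of integrals of products of one-dimensional Gaussians times `zᵢ zⱼ²`, which Fubini
and the first three moments of a shifted Gaussian evaluate in closed form, in any dimension.
In the divergence of that closed form, the inner sum does not depend on `vᵢ`: its `j = i` term
carries the factor `aᵢ - aᵢ = 0`. -/

open Real

section GaussianMoments

variable {c : ℝ}

lemma exp_quadratic_eq_mul_exp_neg_mul_sq (hc : c ≠ 0) (β γ x : ℝ) :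
    exp (-c * x ^ 2 + β * x + γ)
      = exp (β ^ 2 / (4 * c) + γ) * exp (-c * (x - β / (2 * c)) ^ 2) := by
  rw [← exp_add]; congr 1; field_simp; ring

lemma integrable_add_pow_mul_exp_neg_mul_sq (hc : 0 < c) (μ : ℝ) (n : ℕ) :
    Integrable fun y : ℝ => (y + μ) ^ n * exp (-c * y ^ 2) := by
  simp_rw [add_pow, Finset.sum_mul]
  refine integrable_finsetSum _ fun k _ => ?_
  have hk : (-1 : ℝ) < k := by linarith [(Nat.cast_nonneg k : (0 : ℝ) ≤ k)]
  simpa [rpow_natCast, mul_comm, mul_left_comm, mul_assoc] using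
    (integrable_rpow_mul_exp_neg_mul_sq hc hk).const_mul (μ ^ (n - k) * n.choose k)

lemma integral_sq_mul_exp_neg_mul_sq (hc : 0 < c) :
    ∫ x : ℝ, x ^ 2 * exp (-c * x ^ 2) = 1 / (2 * c) * √(π / c) := by
  have hsym : ∫ x : ℝ, x ^ 2 * exp (-c * x ^ 2)
      = 2 * ∫ x in Set.Ioi (0 : ℝ), x ^ 2 * exp (-c * x ^ 2) := by
    rw [← integral_comp_abs (f := fun x => x ^ 2 * exp (-c * x ^ 2))]
    simp only [sq_abs]
  have hΓ : ∫ x in Set.Ioi (0 : ℝ), x ^ 2 * exp (-c * x ^ 2)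
      = c ^ (-(3 / 2) : ℝ) * (1 / 2) * Gamma (1 / 2 + 1) := by
    convert integral_rpow_mul_exp_neg_mul_rpow (p := 2) (q := 2) (by norm_num) (by norm_num) hc
      using 2 <;> norm_num [rpow_two]
  rw [hsym, hΓ, Gamma_add_one (by norm_num), Gamma_one_half_eq, rpow_neg hc.le,
    show (3 / 2 : ℝ) = 1 + 1 / 2 by norm_num, rpow_add hc, rpow_one, ← sqrt_eq_rpow,
    sqrt_div pi_nonneg]
  have : 0 < √c := sqrt_pos.2 hc
  field_simp

variable (β γ : ℝ)

lemma integrable_pow_mul_exp_quadratic (hc : 0 < c) (n : ℕ) :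
    Integrable fun x : ℝ => x ^ n * exp (-c * x ^ 2 + β * x + γ) := by
  simp_rw [exp_quadratic_eq_mul_exp_neg_mul_sq hc.ne']
  have := ((integrable_add_pow_mul_exp_neg_mul_sq hc (β / (2 * c)) n).comp_sub_right
    (β / (2 * c))).const_mul (exp (β ^ 2 / (4 * c) + γ))
  refine this.congr (.of_forall fun x => ?_)
  simp only [sub_add_cancel]; ring

lemma integral_pow_mul_exp_quadratic (hc : 0 < c) (n : ℕ) :
    ∫ x : ℝ, x ^ n * exp (-c * x ^ 2 + β * x + γ)
      = exp (β ^ 2 / (4 * c) + γ) * ∫ y : ℝ, (y + β / (2 * c)) ^ n * exp (-c * y ^ 2) := by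
  symm
  rw [← integral_const_mul, ← integral_sub_right_eq_self _ (β / (2 * c))]
  congr 1; ext x
  rw [exp_quadratic_eq_mul_exp_neg_mul_sq hc.ne', sub_add_cancel]; ring

lemma integral_exp_quadratic (hc : 0 < c) :
    ∫ x : ℝ, exp (-c * x ^ 2 + β * x + γ) = √(π / c) * exp (β ^ 2 / (4 * c) + γ) := by
  simpa only [pow_zero, one_mul, integral_gaussian, mul_comm]
    using integral_pow_mul_exp_quadratic β γ hc 0

lemma integral_mul_exp_neg_mul_sq_eq_zero (c : ℝ) : ∫ y : ℝ, y * exp (-c * y ^ 2) = 0 := by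
  have h := integral_neg_eq_self (fun y : ℝ => y * exp (-c * y ^ 2)) volume
  simp only [neg_mul, neg_sq, integral_neg] at h ⊢
  linarith

lemma integral_mul_exp_quadratic (hc : 0 < c) :
    ∫ x : ℝ, x * exp (-c * x ^ 2 + β * x + γ)
      = β / (2 * c) * (√(π / c) * exp (β ^ 2 / (4 * c) + γ)) := by
  set μ := β / (2 * c)
  have hsplit : (fun y : ℝ => (y + μ) * exp (-c * y ^ 2))
      = fun y => y * exp (-c * y ^ 2) + μ * exp (-c * y ^ 2) := by
    ext y; ring
  have h := integral_pow_mul_exp_quadratic β γ hc 1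
  simp only [pow_one] at h
  rw [h, hsplit,
    integral_add (integrable_mul_exp_neg_mul_sq hc)
      ((integrable_exp_neg_mul_sq hc).const_mul μ),
    integral_const_mul, integral_mul_exp_neg_mul_sq_eq_zero, integral_gaussian]
  ring

lemma integral_sq_mul_exp_quadratic (hc : 0 < c) :
    ∫ x : ℝ, x ^ 2 * exp (-c * x ^ 2 + β * x + γ)
      = ((β / (2 * c)) ^ 2 + 1 / (2 * c)) * (√(π / c) * exp (β ^ 2 / (4 * c) + γ)) := by
  set μ := β / (2 * c)
  have hsplit : (fun y : ℝ => (y + μ) ^ 2 * exp (-c * y ^ 2))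
      = fun y => y ^ 2 * exp (-c * y ^ 2)
          + (2 * μ * (y * exp (-c * y ^ 2)) + μ ^ 2 * exp (-c * y ^ 2)) := by
    ext y; ring
  have hint : Integrable fun y : ℝ => y ^ 2 * exp (-c * y ^ 2) := by
    simpa using integrable_add_pow_mul_exp_neg_mul_sq hc 0 2
  have hint' : Integrable fun y : ℝ =>
      2 * μ * (y * exp (-c * y ^ 2)) + μ ^ 2 * exp (-c * y ^ 2) :=
    ((integrable_mul_exp_neg_mul_sq hc).const_mul _).add
      ((integrable_exp_neg_mul_sq hc).const_mul _)
  rw [integral_pow_mul_exp_quadratic β γ hc 2, hsplit, integral_add hint hint',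
    integral_add ((integrable_mul_exp_neg_mul_sq hc).const_mul _)
      ((integrable_exp_neg_mul_sq hc).const_mul _),
    integral_const_mul, integral_const_mul,
    integral_mul_exp_neg_mul_sq_eq_zero, integral_gaussian, integral_sq_mul_exp_neg_mul_sq hc]
  ring

end GaussianMoments

section EuclideanProduct

variable {ι : Type*} [Fintype ι]

lemma integral_euclideanSpace_prod (f : ι → ℝ → ℝ) :
    ∫ x : EuclideanSpace ℝ ι, ∏ i, f i (x i) = ∏ i, ∫ t, f i t := by
  rw [← integral_fintype_prod_volume_eq_prod,
    ← (EuclideanSpace.volume_preserving_symm_measurableEquiv_toLp ι).integral_comp']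
  rfl

lemma integrable_euclideanSpace_prod {f : ι → ℝ → ℝ} (hf : ∀ i, Integrable (f i)) :
    Integrable fun x : EuclideanSpace ℝ ι => ∏ i, f i (x i) :=
  ((EuclideanSpace.volume_preserving_symm_measurableEquiv_toLp ι).integrable_comp_emb
    (MeasurableEquiv.measurableEmbedding _)).2 (Integrable.fintype_prod hf)

variable [DecidableEq ι]

lemma mul_sq_mul_prod_eq_prod (h : ι → ℝ → ℝ) (x : EuclideanSpace ℝ ι) (i j : ι) :
    x i * x j ^ 2 * ∏ k, h k (x k)
      = ∏ k, (if k = i then x k else 1) * (if k = j then x k ^ 2 else 1) * h k (x k) := by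
  simp only [Finset.prod_mul_distrib, Finset.prod_ite_eq', Finset.mem_univ, if_true]

lemma integrable_coord_mul_coord_sq_mul_prod {h : ι → ℝ → ℝ}
    (hh : ∀ k (n : ℕ), Integrable fun t => t ^ n * h k t) (i j : ι) :
    Integrable fun x : EuclideanSpace ℝ ι => x i * x j ^ 2 * ∏ k, h k (x k) := by
  simp_rw [mul_sq_mul_prod_eq_prod h]
  refine integrable_euclideanSpace_prod
    (f := fun k t => (if k = i then t else 1) * (if k = j then t ^ 2 else 1) * h k t) fun k => ?_
  split_ifs
  · simpa [← pow_succ'] using hh k 3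
  · simpa using hh k 1
  · simpa using hh k 2
  · simpa using hh k 0

lemma integral_coord_mul_coord_sq_mul_prod {h : ι → ℝ → ℝ} {M : ι → ℝ} {μ s : ℝ}
    {i j : ι} (hij : i ≠ j) (h0 : ∀ k, ∫ t, h k t = M k) (h1 : ∫ t, t * h i t = μ * M i)
    (h2 : ∫ t, t ^ 2 * h j t = s * M j) :
    ∫ x : EuclideanSpace ℝ ι, x i * x j ^ 2 * ∏ k, h k (x k) = μ * s * ∏ k, M k := by
  simp_rw [mul_sq_mul_prod_eq_prod h]
  rw [integral_euclideanSpace_prod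
    (fun k t => (if k = i then t else 1) * (if k = j then t ^ 2 else 1) * h k t)]
  rw [show μ * s * ∏ k, M k
      = ∏ k, (if k = i then μ else 1) * (if k = j then s else 1) * M k by
    simp only [Finset.prod_mul_distrib, Finset.prod_ite_eq', Finset.mem_univ, if_true]]
  refine Finset.prod_congr rfl fun k _ => ?_
  split_ifs with hi hj hj
  · exact absurd (hi.symm.trans hj) hij
  · simpa [hi] using h1
  · simpa [hj] using h2
  · simpa using h0 k

end EuclideanProduct

section DiagGaussian

variable {ι : Type*} [Fintype ι]

noncomputable def diagGaussian (a : ι → ℝ) (v : EuclideanSpace ℝ ι) : ℝ :=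
  exp (-∑ i, a i * v i ^ 2)

lemma hasFDerivAt_diagGaussian (a : ι → ℝ) (v : EuclideanSpace ℝ ι) :
    HasFDerivAt (diagGaussian a)
      (∑ i, (-2 * a i * v i * diagGaussian a v) • EuclideanSpace.proj (𝕜 := ℝ) i) v := by
  have hsum := HasFDerivAt.fun_sum (u := Finset.univ) fun i _ =>
    (((EuclideanSpace.proj (𝕜 := ℝ) i).hasFDerivAt (x := v)).pow 2).const_mul (a i)
  refine hsum.neg.exp.congr_fderiv ?_
  ext x
  simp only [PiLp.proj_apply, Pi.neg_apply, Nat.add_one_sub_one, pow_one, nsmul_eq_mul,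
    Nat.cast_ofNat, smul_neg, neg_apply, smul_apply, sum_apply, smul_eq_mul, Finset.mul_sum,
    neg_mul, diagGaussian, neg_smul, Finset.sum_neg_distrib, neg_inj]
  exact Finset.sum_congr rfl fun i _ => by ring

lemma diagGaussian_mul_diagGaussian_sub (a b : ι → ℝ) (v z : EuclideanSpace ℝ ι) :
    diagGaussian b z * diagGaussian a (v - z)
      = ∏ k, exp (-(a k + b k) * z k ^ 2 + 2 * a k * v k * z k + -(a k * v k ^ 2)) := by
  simp only [diagGaussian, ← exp_add, ← exp_sum, ← Finset.sum_neg_distrib,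
    ← Finset.sum_add_distrib]
  congr 1
  refine Finset.sum_congr rfl fun k _ => ?_
  simp only [PiLp.sub_apply]
  ring

lemma diagGaussian_mul_prod_exp {a b : ι → ℝ} (hab : ∀ k, 0 < a k + b k)
    (v : EuclideanSpace ℝ ι) :
    diagGaussian a v * ∏ k, exp ((2 * a k * v k) ^ 2 / (4 * (a k + b k)) + -(a k * v k ^ 2))
      = diagGaussian (fun k => a k + a k * b k / (a k + b k)) v := by
  simp only [diagGaussian, ← exp_sum, ← exp_add, ← Finset.sum_neg_distrib,
    ← Finset.sum_add_distrib]
  congr 1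
  refine Finset.sum_congr rfl fun k _ => ?_
  have : a k + b k ≠ 0 := (hab k).ne'
  field_simp
  ring

variable [DecidableEq ι]

lemma gradient_apply_eq_fderiv_single (f : EuclideanSpace ℝ ι → ℝ) (v : EuclideanSpace ℝ ι)
    (i : ι) : gradient f v i = fderiv ℝ f v (EuclideanSpace.single i 1) := by
  rw [gradient, ← InnerProductSpace.toDual_symm_apply, real_inner_comm,
    EuclideanSpace.inner_single_left]
  simp

lemma fderiv_diagGaussian_single (a : ι → ℝ) (v : EuclideanSpace ℝ ι) (i : ι) :
    fderiv ℝ (diagGaussian a) v (EuclideanSpace.single i 1)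
      = -2 * a i * v i * diagGaussian a v := by
  simp [(hasFDerivAt_diagGaussian a v).fderiv, PiLp.single_apply]

lemma diagGaussian_smul_gradient_sub_apply (a : ι → ℝ) (v w : EuclideanSpace ℝ ι) (j : ι) :
    (diagGaussian a w • gradient (diagGaussian a) v
        - diagGaussian a v • gradient (diagGaussian a) w) j
      = -2 * diagGaussian a v * diagGaussian a w * (a j * (v - w) j) := by
  simp only [PiLp.sub_apply, PiLp.smul_apply, smul_eq_mul, gradient_apply_eq_fderiv_single,
    fderiv_diagGaussian_single]
  ring

lemma landauIntegrand_diagGaussian_apply (a b : ι → ℝ) (v w : EuclideanSpace ℝ ι) (i : ι) :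
    (diagGaussian b (v - w) •
        ((‖v - w‖ ^ 2) • (diagGaussian a w • gradient (diagGaussian a) v
            - diagGaussian a v • gradient (diagGaussian a) w)
          - (inner ℝ (v - w) (diagGaussian a w • gradient (diagGaussian a) v
              - diagGaussian a v • gradient (diagGaussian a) w) : ℝ) • (v - w))) i
      = -2 * diagGaussian a v * ∑ j, (a i - a j)
          * ((v - w) i * (v - w) j ^ 2 * (diagGaussian b (v - w) * diagGaussian a w)) := by
  set G := diagGaussian a w • gradient (diagGaussian a) v
    - diagGaussian a v • gradient (diagGaussian a) w
  have hG : ∀ j, G j = -2 * diagGaussian a v * diagGaussian a w * (a j * (v - w) j) :=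
    diagGaussian_smul_gradient_sub_apply a v w
  simp only [PiLp.smul_apply, PiLp.sub_apply, smul_eq_mul, EuclideanSpace.real_norm_sq_eq,
    PiLp.inner_apply, RCLike.inner_apply, conj_trivial, hG]
  simp only [Finset.mul_sum, Finset.sum_mul, ← Finset.sum_sub_distrib]
  refine Finset.sum_congr rfl fun j _ => ?_
  ring

lemma integrable_sub_coord_mul_sq_mul_diagGaussian {a b : ι → ℝ} (hab : ∀ k, 0 < a k + b k)
    (v : EuclideanSpace ℝ ι) (i j : ι) :
    Integrable fun w : EuclideanSpace ℝ ι =>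
      (v - w) i * (v - w) j ^ 2 * (diagGaussian b (v - w) * diagGaussian a w) := by
  refine ((integrable_coord_mul_coord_sq_mul_prod
    (h := fun k t => exp (-(a k + b k) * t ^ 2 + 2 * a k * v k * t + -(a k * v k ^ 2)))
    (fun k n => integrable_pow_mul_exp_quadratic _ _ (hab k) n) i j).comp_sub_left v).congr
    (.of_forall fun w => ?_)
  dsimp only
  rw [← diagGaussian_mul_diagGaussian_sub, sub_sub_cancel]

lemma diagGaussian_mul_integral_sub_coord_mul_sq_mul_diagGaussian {a b : ι → ℝ}
    (hab : ∀ k, 0 < a k + b k) (v : EuclideanSpace ℝ ι) {i j : ι} (hij : i ≠ j) :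
    diagGaussian a v * ∫ w : EuclideanSpace ℝ ι,
        (v - w) i * (v - w) j ^ 2 * (diagGaussian b (v - w) * diagGaussian a w)
      = (∏ k, √(π / (a k + b k))) * diagGaussian (fun k => a k + a k * b k / (a k + b k)) v
          * (a i / (a i + b i) * v i)
          * ((a j / (a j + b j) * v j) ^ 2 + 1 / (2 * (a j + b j))) := by
  have hμ : ∀ k, 2 * a k * v k / (2 * (a k + b k)) = a k / (a k + b k) * v k := fun k => by
    rw [mul_assoc, mul_div_mul_left _ _ two_ne_zero, mul_div_right_comm]
  have hmoment := integral_coord_mul_coord_sq_mul_prod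
    (h := fun k t => exp (-(a k + b k) * t ^ 2 + 2 * a k * v k * t + -(a k * v k ^ 2)))
    (μ := a i / (a i + b i) * v i) (s := (a j / (a j + b j) * v j) ^ 2 + 1 / (2 * (a j + b j)))
    hij (fun k => integral_exp_quadratic _ _ (hab k))
    ((integral_mul_exp_quadratic _ _ (hab i)).trans (by rw [hμ]))
    ((integral_sq_mul_exp_quadratic _ _ (hab j)).trans (by rw [hμ]))
  rw [← integral_sub_left_eq_self _ volume v]
  simp only [sub_sub_cancel, diagGaussian_mul_diagGaussian_sub, hmoment, Finset.prod_mul_distrib]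
  rw [← diagGaussian_mul_prod_exp hab v]
  ring

end DiagGaussian

section Landau

variable {d : ℕ}

theorem landauQc_diagGaussian_apply {a b : Fin d → ℝ} (hab : ∀ k, 0 < a k + b k)
    (v : EuclideanSpace ℝ (Fin d)) (i : Fin d) :
    landauQc Set.univ (diagGaussian b) (diagGaussian a) v i
      = -2 * (∏ k, √(π / (a k + b k)))
          * diagGaussian (fun k => a k + a k * b k / (a k + b k)) v * (a i / (a i + b i) * v i)
          * ∑ j, (a i - a j) * ((a j / (a j + b j) * v j) ^ 2 + 1 / (2 * (a j + b j))) := by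
  have hterm := integrable_sub_coord_mul_sq_mul_diagGaussian hab v
  rw [landauQc, setIntegral_univ, eval_integral_piLp]
  · simp_rw [landauIntegrand_diagGaussian_apply]
    rw [integral_const_mul, integral_finsetSum _ fun j _ => (hterm i j).const_mul _]
    simp only [integral_const_mul, Finset.mul_sum]
    refine Finset.sum_congr rfl fun j _ => ?_
    by_cases hji : j = i
    · simp [hji]
    · linear_combination (-2 * (a i - a j))
        * diagGaussian_mul_integral_sub_coord_mul_sq_mul_diagGaussian hab v (Ne.symm hji)
  · intro i'
    simp_rw [landauIntegrand_diagGaussian_apply]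
    exact (integrable_finsetSum _ fun j _ => (hterm i' j).const_mul _).const_mul _

theorem landauDiv_landauQc_diagGaussian {a b : Fin d → ℝ} (hab : ∀ k, 0 < a k + b k)
    (v : EuclideanSpace ℝ (Fin d)) :
    landauDiv (landauQc Set.univ (diagGaussian b) (diagGaussian a)) v
      = -2 * (∏ k, √(π / (a k + b k)))
          * diagGaussian (fun k => a k + a k * b k / (a k + b k)) v
          * ∑ i, a i / (a i + b i) * (1 - 2 * (a i + a i * b i / (a i + b i)) * v i ^ 2)
            * ∑ j, (a i - a j) * ((a j / (a j + b j) * v j) ^ 2 + 1 / (2 * (a j + b j))) := by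
  unfold landauDiv
  simp_rw [landauQc_diagGaussian_apply hab]
  rw [Finset.mul_sum]
  refine Finset.sum_congr rfl fun i _ => ?_
  have hcoord : ∀ j, HasFDerivAt (fun u : EuclideanSpace ℝ (Fin d) => u j)
      (EuclideanSpace.proj (𝕜 := ℝ) j) v := fun j => (EuclideanSpace.proj (𝕜 := ℝ) j).hasFDerivAt
  have hinner := HasFDerivAt.fun_sum (u := Finset.univ) fun j _ =>
    ((((hcoord j).const_mul (a j / (a j + b j))).pow 2).add_const
      (1 / (2 * (a j + b j)))).const_mul (a i - a j)
  have hQ := (((hasFDerivAt_diagGaussian (fun k => a k + a k * b k / (a k + b k)) v).const_mul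
    (-2 * ∏ k, √(π / (a k + b k)))).fun_mul ((hcoord i).const_mul (a i / (a i + b i)))).fun_mul
    hinner
  rw [hQ.fderiv]
  simp only [neg_mul, Nat.add_one_sub_one, pow_one, nsmul_eq_mul, Nat.cast_ofNat, neg_smul,
    one_div, mul_inv_rev, Finset.sum_neg_distrib, smul_neg, neg_neg, smul_add, add_apply,
    neg_apply, smul_apply, sum_apply, PiLp.proj_apply, PiLp.single_apply, smul_eq_mul, mul_ite,
    mul_one, mul_zero, Finset.sum_ite_eq', Finset.mem_univ, ↓reduceIte, sub_self, zero_mul,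
    neg_zero, zero_add]
  ring

end Landau

/-- Test problem C in three dimensions: Ω = ℝ³, φ(v) = exp(−v₁² − 2v₂² − 3v₃²),
f(v) = exp(−v₁²/2 − v₂²/4 − v₃²/8); then
Q(f,f)(v) = ∇·Q^c(f,f)(v) = −(1/41006250) q₁(v) (q₃₁(v) + q₃₂(v)). -/
theorem landauQ_testC_3d :
    ∀ v : EuclideanSpace ℝ (Fin 3),
      landauDiv (landauQc Set.univ
          (fun w => Real.exp (-(w 0) ^ 2 - 2 * (w 1) ^ 2 - 3 * (w 2) ^ 2))
          (fun w => Real.exp (-(w 0) ^ 2 / 2 - (w 1) ^ 2 / 4 - (w 2) ^ 2 / 8))) v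
      = -(1 / 41006250) *
          (Real.sqrt 3 * Real.pi ^ ((3 : ℝ) / 2)
            * Real.exp (-(5 / 6) * (v 0) ^ 2 - 17 / 36 * (v 1) ^ 2
                - 49 / 200 * (v 2) ^ 2)) *
          ((17500 * (v 0) ^ 2 * (v 1) ^ 2 + 7047 * (v 0) ^ 2 * (v 2) ^ 2
              + 135 * (v 1) ^ 2 * (v 2) ^ 2)
            + (-1005300 * (v 0) ^ 2 + 111000 * (v 1) ^ 2 + 46899 * (v 2) ^ 2
                + 369900)) := by
  intro v
  have hφ : (fun w : EuclideanSpace ℝ (Fin 3) =>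
      Real.exp (-(w 0) ^ 2 - 2 * (w 1) ^ 2 - 3 * (w 2) ^ 2)) = diagGaussian ![1, 2, 3] := by
    ext w
    simp only [diagGaussian, Fin.sum_univ_three, Matrix.cons_val_zero, Matrix.cons_val_one,
      Matrix.cons_val_two, Matrix.head_cons, Matrix.tail_cons]
    congr 1; ring
  have hf : (fun w : EuclideanSpace ℝ (Fin 3) =>
      Real.exp (-(w 0) ^ 2 / 2 - (w 1) ^ 2 / 4 - (w 2) ^ 2 / 8))
        = diagGaussian ![1 / 2, 1 / 4, 1 / 8] := by
    ext w
    simp only [diagGaussian, Fin.sum_univ_three, Matrix.cons_val_zero, Matrix.cons_val_one,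
      Matrix.cons_val_two, Matrix.head_cons, Matrix.tail_cons]
    congr 1; ring
  have hsqrt : √(π / (1 / 2 + 1)) * √(π / (1 / 4 + 2)) * √(π / (1 / 8 + 3))
      = 8 / 45 * √3 * π ^ (3 / 2 : ℝ) := by
    rw [← sqrt_mul (by positivity), ← sqrt_mul (by positivity),
      show π / (1 / 2 + 1) * (π / (1 / 4 + 2)) * (π / (1 / 8 + 3)) = (8 / 45) ^ 2 * 3 * π ^ 3 by
        ring,
      sqrt_mul (by positivity), sqrt_mul (by positivity), sqrt_sq (by positivity),
      sqrt_eq_rpow (π ^ 3), ← rpow_natCast, ← rpow_mul pi_nonneg]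
    norm_num
  rw [hφ, hf, landauDiv_landauQc_diagGaussian (by intro k; fin_cases k <;> norm_num)]
  simp only [Fin.sum_univ_three, Fin.prod_univ_three, diagGaussian, Matrix.cons_val_zero,
    Matrix.cons_val_one, Matrix.cons_val_two, Matrix.head_cons, Matrix.tail_cons]
  rw [hsqrt]
  ring_nf
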